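/- Consider n subsystems with states in a finite set X evolving as X^i_{t+1} = f(Z_t, X^i_t, γ_t(X^i_t), W^i_t), where Z_t is the empirical distribution of (X^1_t,...,X^n_t), the noises W^i_t are i.i.d. across i and t with common distribution ν, and γ_t : X → U is a prescription that is a function of Z_{1:t}. Then the conditional distribution of Z_{t+1} given (Z_{1:t}, γ_{1:t}) equals the conditional distribution of Z_{t+1} given (Z_t, γ_t); i.e., the mean-field process {Z_t} is a controlled Markov process with control γ_t. -/

import Mathlib

/-!
On an event `S` determined by the initial states and the noises before time `t`, on which
`Z_t = z` and `γ_t = γ`, the noise vector `W_t` is independent of `S`, and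
`Z_{t+1}` is the empirical distribution of `f(z, X^i_t, γ(X^i_t), W^i_t)`. Since the noises are
i.i.d. across `i`, the law of that empirical distribution is invariant under permuting the
subsystems, so it depends on `X_t` only through `Z_t = z`. Hence `P(Z_{t+1} = z' | S)` is the
same kernel value for every such `S`, in particular for the two conditioning events.
-/

open scoped ENNReal

noncomputable section

/-- Empirical distribution (mean field) of a tuple of `n` points in a finite set `X`. -/
def emp {X : Type*} [Fintype X] [DecidableEq X] {n : ℕ} (x : Fin n → X) : X → ℝ :=
  fun a => ((Finset.univ.filter fun i => x i = a).card : ℝ) / n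

variable {X U W : Type*}

/-- Closed-loop state process of the mean-field system on the canonical sample space
`Ω = (Fin n → X) × (Fin T → Fin n → W)` (initial states and noises):
`X^i_{t+1} = f(Z_t, X^i_t, γ_t(X^i_t), W^i_t)` where the prescription
`γ_t = ψ_t(Z_{0:t})` is a function of the mean-field history. -/
def mfState [Fintype X] [DecidableEq X] [Inhabited W] {n T : ℕ}
    (f : (X → ℝ) → X → U → W → X)
    (ψ : (t : ℕ) → (Fin (t + 1) → (X → ℝ)) → X → U)
    (ω : (Fin n → X) × (Fin T → Fin n → W)) : ℕ → Fin n → X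
  | 0 => ω.1
  | t + 1 => fun i =>
      f (emp (mfState f ψ ω t)) (mfState f ψ ω t i)
        ((ψ t fun s : Fin (t + 1) => emp (mfState f ψ ω s)) (mfState f ψ ω t i))
        (if h : t < T then ω.2 ⟨t, h⟩ i else default)
  termination_by t => t
  decreasing_by all_goals first | exact s.isLt | omega

section EmpiricalDistribution

variable [Fintype X] [DecidableEq X] {n : ℕ}

theorem emp_comp_perm (x : Fin n → X) (σ : Equiv.Perm (Fin n)) : emp (x ∘ σ) = emp x := by
  funext a
  unfold emp
  congr 2
  exact Finset.card_equiv σ fun i => by simp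

theorem card_filter_eq_of_emp_eq {x x' : Fin n → X} (h : emp x = emp x') (a : X) :
    (Finset.univ.filter fun i => x i = a).card = (Finset.univ.filter fun i => x' i = a).card := by
  rcases Nat.eq_zero_or_pos n with rfl | hn
  · -- `emp` carries no information for `n = 0` (division by zero), but both filters are empty
    simp
  · have hfreq := congrFun h a
    unfold emp at hfreq
    exact_mod_cast (div_left_inj' (Nat.cast_ne_zero.mpr hn.ne')).mp hfreq

theorem exists_perm_of_emp_eq {x x' : Fin n → X} (h : emp x = emp x') :
    ∃ σ : Equiv.Perm (Fin n), x = x' ∘ σ := by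
  have e : ∀ a, {i // x i = a} ≃ {i // x' i = a} := fun a =>
    Fintype.equivOfCardEq <| by simpa [Fintype.card_subtype] using card_filter_eq_of_emp_eq h a
  exact ⟨Equiv.ofFiberEquiv e, funext fun i => (Equiv.ofFiberEquiv_map e i).symm⟩

end EmpiricalDistribution

section StepKernel

variable [Fintype X] [DecidableEq X] [Fintype W] {n : ℕ}

def stepKernel (ν : W → ℝ≥0∞) (g : X → W → X) (x : Fin n → X) (z' : X → ℝ) : ℝ≥0∞ :=
  ∑ v : Fin n → W with emp (fun i => g (x i) (v i)) = z', ∏ i, ν (v i)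

theorem stepKernel_comp_perm (ν : W → ℝ≥0∞) (g : X → W → X) (x : Fin n → X) (z' : X → ℝ)
    (σ : Equiv.Perm (Fin n)) : stepKernel ν g (x ∘ σ) z' = stepKernel ν g x z' := by
  unfold stepKernel
  rw [Finset.sum_filter, Finset.sum_filter]
  refine Fintype.sum_equiv (σ.arrowCongr (Equiv.refl W)) _ _ fun v => ?_
  have hemp : emp (fun i => g (x (σ i)) (v i)) =
      emp fun i => g (x i) (σ.arrowCongr (Equiv.refl W) v i) := by
    conv_rhs => rw [← emp_comp_perm _ σ]
    simp [Function.comp_def]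
  have hprod : ∏ i, ν (v i) = ∏ i, ν (σ.arrowCongr (Equiv.refl W) v i) := by
    simpa using (Equiv.prod_comp σ.symm fun i => ν (v i)).symm
  simp only [Function.comp_apply, hemp, hprod]

theorem stepKernel_eq_of_emp_eq (ν : W → ℝ≥0∞) (g : X → W → X) {x x' : Fin n → X}
    (h : emp x = emp x') (z' : X → ℝ) : stepKernel ν g x z' = stepKernel ν g x' z' := by
  obtain ⟨σ, rfl⟩ := exists_perm_of_emp_eq h
  exact stepKernel_comp_perm ν g x' z' σ

end StepKernel

section Events

variable {n T : ℕ}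

def AgreeBefore (t : ℕ) (ω ω' : (Fin n → X) × (Fin T → Fin n → W)) : Prop :=
  ω.1 = ω'.1 ∧ ∀ r : Fin T, (r : ℕ) < t → ω.2 r = ω'.2 r

theorem AgreeBefore.symm {t : ℕ} {ω ω' : (Fin n → X) × (Fin T → Fin n → W)}
    (h : AgreeBefore t ω ω') : AgreeBefore t ω' ω :=
  ⟨h.1.symm, fun r hr => (h.2 r hr).symm⟩

def IsDeterminedBefore (t : ℕ) (S : Finset ((Fin n → X) × (Fin T → Fin n → W))) : Prop :=
  ∀ ω ω', AgreeBefore t ω ω' → ω ∈ S → ω' ∈ S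

theorem IsDeterminedBefore.mem_iff {t : ℕ} {S : Finset ((Fin n → X) × (Fin T → Fin n → W))}
    (hS : IsDeterminedBefore t S) {ω ω'} (h : AgreeBefore t ω ω') : ω ∈ S ↔ ω' ∈ S :=
  ⟨hS ω ω' h, hS ω' ω h.symm⟩

end Events

section Dynamics

variable [Fintype X] [DecidableEq X] [Inhabited W] {n T : ℕ}
  (f : (X → ℝ) → X → U → W → X) (ψ : (t : ℕ) → (Fin (t + 1) → (X → ℝ)) → X → U)

theorem mfState_succ (ω : (Fin n → X) × (Fin T → Fin n → W)) {t : ℕ} (ht : t < T) :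
    mfState f ψ ω (t + 1) = fun i =>
      f (emp (mfState f ψ ω t)) (mfState f ψ ω t i)
        ((ψ t fun s : Fin (t + 1) => emp (mfState f ψ ω s)) (mfState f ψ ω t i))
        (ω.2 ⟨t, ht⟩ i) := by
  rw [mfState]
  simp only [dif_pos ht]

theorem mfState_eq_of_agreeBefore {t : ℕ} {ω ω' : (Fin n → X) × (Fin T → Fin n → W)}
    (h : AgreeBefore t ω ω') {s : ℕ} (hs : s ≤ t) : mfState f ψ ω s = mfState f ψ ω' s := by
  induction s using Nat.strong_induction_on with
  | _ s ih =>
    cases s with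
    | zero => rw [mfState, mfState]; exact h.1
    | succ s =>
      have hpast : ∀ r ≤ s, mfState f ψ ω r = mfState f ψ ω' r := fun r hr =>
        ih r (by omega) (by omega)
      have hhist : (fun r : Fin (s + 1) => emp (mfState f ψ ω r)) =
          fun r : Fin (s + 1) => emp (mfState f ψ ω' r) :=
        funext fun r => by rw [hpast r r.is_le]
      rw [mfState, mfState]
      simp only [hpast s le_rfl, hhist]
      split_ifs with hsT
      · rw [h.2 ⟨s, hsT⟩ hs]
      · rfl

theorem mfHistory_eq_of_agreeBefore {t : ℕ} {ω ω' : (Fin n → X) × (Fin T → Fin n → W)}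
    (h : AgreeBefore t ω ω') {s : ℕ} (hs : s ≤ t) :
    (fun r : Fin (s + 1) => emp (mfState f ψ ω r)) =
      fun r : Fin (s + 1) => emp (mfState f ψ ω' r) :=
  funext fun r => by rw [mfState_eq_of_agreeBefore f ψ h (r.is_le.trans hs)]

end Dynamics

section ProductMass

variable {n T : ℕ}

def productMass (ρ : X → ℝ≥0∞) (ν : W → ℝ≥0∞) (ω : (Fin n → X) × (Fin T → Fin n → W)) :
    ℝ≥0∞ :=
  (∏ i, ρ (ω.1 i)) * ∏ t, ∏ i, ν (ω.2 t i)

theorem productMass_split (ρ : X → ℝ≥0∞) (ν : W → ℝ≥0∞) (τ : Fin T) (x₀ : Fin n → X)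
    (v : Fin n → W) (w : {r // r ≠ τ} → Fin n → W) :
    productMass ρ ν (x₀, (Equiv.funSplitAt τ (Fin n → W)).symm (v, w)) =
      (∏ i, ν (v i)) * ((∏ i, ρ (x₀ i)) * ∏ r, ∏ i, ν (w r i)) := by
  have hv : (Equiv.funSplitAt τ (Fin n → W)).symm (v, w) τ = v := by simp
  have hw : ∀ r : {r // r ≠ τ}, (Equiv.funSplitAt τ (Fin n → W)).symm (v, w) r = w r :=
    fun r => by simp [r.2]
  rw [productMass, Fintype.prod_eq_mul_prod_subtype_ne _ τ]
  simp only [hv, hw]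
  ring

variable [Fintype X] [Fintype W]

theorem sum_prod_eq_one {ν : W → ℝ≥0∞} (hν : ∑ w, ν w = 1) :
    ∑ v : Fin n → W, ∏ i, ν (v i) = 1 := by
  rw [← Fintype.sum_pow, hν, one_pow]

theorem sum_productMass {ρ : X → ℝ≥0∞} {ν : W → ℝ≥0∞} (hρ : ∑ x, ρ x = 1)
    (hν : ∑ w, ν w = 1) : ∑ ω, productMass (n := n) (T := T) ρ ν ω = 1 := by
  have hpaths : ∑ w : Fin T → Fin n → W, ∏ t, ∏ i, ν (w t i) = 1 := by
    rw [← Fintype.prod_sum fun (_ : Fin T) (v : Fin n → W) => ∏ i, ν (v i)]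
    simp [sum_prod_eq_one hν]
  simp only [productMass, Fintype.sum_prod_type, ← Finset.mul_sum, hpaths,
    ← Fintype.sum_pow, hρ, one_pow, mul_one]

theorem sum_productMass_ne_top {ρ : X → ℝ≥0∞} {ν : W → ℝ≥0∞} (hρ : ∑ x, ρ x = 1)
    (hν : ∑ w, ν w = 1) (S : Finset ((Fin n → X) × (Fin T → Fin n → W))) :
    ∑ ω ∈ S, productMass ρ ν ω ≠ ⊤ :=
  ne_top_of_le_ne_top ENNReal.one_ne_top <| sum_productMass hρ hν ▸
    Finset.sum_le_sum_of_subset (Finset.subset_univ S)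

theorem sum_eq_sum_split {M : Type*} [AddCommMonoid M]
    (F : (Fin n → X) × (Fin T → Fin n → W) → M) (τ : Fin T) :
    ∑ ω, F ω = ∑ x₀, ∑ w : {r // r ≠ τ} → Fin n → W, ∑ v,
      F (x₀, (Equiv.funSplitAt τ (Fin n → W)).symm (v, w)) := by
  simp only [Fintype.sum_prod_type, ← (Equiv.funSplitAt τ (Fin n → W)).symm.sum_comp]
  exact Finset.sum_congr rfl fun x₀ _ => Finset.sum_comm

end ProductMass

section Factorization

variable [Fintype X] [DecidableEq X] [Fintype W] [DecidableEq W] [Inhabited W] {n T : ℕ}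
  (f : (X → ℝ) → X → U → W → X) (ψ : (t : ℕ) → (Fin (t + 1) → (X → ℝ)) → X → U)

theorem sum_fiber_inter_eq_stepKernel_mul {ρ : X → ℝ≥0∞} {ν : W → ℝ≥0∞} (hν : ∑ w, ν w = 1)
    {t : ℕ} (ht : t < T) {z : X → ℝ} {γ : X → U} {x : Fin n → X} (hx : emp x = z)
    {z' : X → ℝ} {S C : Finset ((Fin n → X) × (Fin T → Fin n → W))}
    (hS : IsDeterminedBefore t S)
    (hSt : ∀ ω ∈ S, emp (mfState f ψ ω t) = z ∧
      (ψ t fun r : Fin (t + 1) => emp (mfState f ψ ω r)) = γ)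
    (hC : ∀ ω, ω ∈ C ↔ emp (mfState f ψ ω (t + 1)) = z')
    (ω : (Fin n → W) → (Fin n → X) × (Fin T → Fin n → W))
    (hagree : ∀ v v', AgreeBefore t (ω v) (ω v')) (hnoise : ∀ v, (ω v).2 ⟨t, ht⟩ = v)
    {M : ℝ≥0∞} (hmass : ∀ v, productMass ρ ν (ω v) = (∏ i, ν (v i)) * M) :
    ∑ v, (if ω v ∈ S ∩ C then productMass ρ ν (ω v) else 0) =
      stepKernel ν (fun a => f z a (γ a)) x z' *
        ∑ v, if ω v ∈ S then productMass ρ ν (ω v) else 0 := by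
  by_cases h₀ : ω default ∈ S
  · obtain ⟨hz, hγ⟩ := hSt _ h₀
    have hmem : ∀ v, ω v ∈ S := fun v => (hS.mem_iff (hagree _ _)).1 h₀
    set y := mfState f ψ (ω default) t
    have hstep : ∀ v, mfState f ψ (ω v) (t + 1) = fun i => f z (y i) (γ (y i)) (v i) := by
      intro v
      rw [mfState_succ f ψ _ ht, mfState_eq_of_agreeBefore f ψ (hagree v default) le_rfl,
        mfHistory_eq_of_agreeBefore f ψ (hagree v default) le_rfl, hz, hγ, hnoise]
    calc ∑ v, (if ω v ∈ S ∩ C then productMass ρ ν (ω v) else 0)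
        = ∑ v : Fin n → W,
            (if emp (fun i => f z (y i) (γ (y i)) (v i)) = z' then ∏ i, ν (v i) else 0) * M := by
          simp only [Finset.mem_inter, hmem, true_and, hC, hstep, hmass, ite_zero_mul]
      _ = stepKernel ν (fun a => f z a (γ a)) y z' * M := by
          rw [stepKernel, Finset.sum_filter, Finset.sum_mul]
      _ = stepKernel ν (fun a => f z a (γ a)) x z' *
            ∑ v, if ω v ∈ S then productMass ρ ν (ω v) else 0 := by
          simp only [hmem, if_true, hmass, ← Finset.sum_mul, sum_prod_eq_one hν, one_mul,
            stepKernel_eq_of_emp_eq _ _ (hz.trans hx.symm)]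
  · have hmem : ∀ v, ω v ∉ S := fun v => mt (hS.mem_iff (hagree _ _)).1 h₀
    simp [hmem]

theorem sum_inter_eq_stepKernel_mul {ρ : X → ℝ≥0∞} {ν : W → ℝ≥0∞} (hν : ∑ w, ν w = 1)
    {t : ℕ} (ht : t < T) {z : X → ℝ} {γ : X → U} {x : Fin n → X} (hx : emp x = z)
    {z' : X → ℝ} {S C : Finset ((Fin n → X) × (Fin T → Fin n → W))}
    (hS : IsDeterminedBefore t S)
    (hSt : ∀ ω ∈ S, emp (mfState f ψ ω t) = z ∧
      (ψ t fun r : Fin (t + 1) => emp (mfState f ψ ω r)) = γ)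
    (hC : ∀ ω, ω ∈ C ↔ emp (mfState f ψ ω (t + 1)) = z') :
    ∑ ω ∈ S ∩ C, productMass ρ ν ω =
      stepKernel ν (fun a => f z a (γ a)) x z' * ∑ ω ∈ S, productMass ρ ν ω := by
  set τ : Fin T := ⟨t, ht⟩
  rw [← Fintype.sum_ite_mem (S ∩ C), ← Fintype.sum_ite_mem S, sum_eq_sum_split _ τ,
    sum_eq_sum_split _ τ, Finset.mul_sum]
  refine Finset.sum_congr rfl fun x₀ _ => ?_
  rw [Finset.mul_sum]
  refine Finset.sum_congr rfl fun w _ => ?_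
  refine sum_fiber_inter_eq_stepKernel_mul f ψ hν ht hx hS hSt hC _ (fun v v' => ?_) (fun v => ?_)
    (productMass_split ρ ν τ x₀ · w)
  · exact ⟨rfl, fun r hr => by simp [(show r < τ from hr).ne]⟩
  · simp [τ]

end Factorization

theorem mean_field_is_controlled_markov_general
    [Fintype X] [DecidableEq X]
    [Fintype W] [DecidableEq W] [Inhabited W] {n T : ℕ}
    (f : (X → ℝ) → X → U → W → X)
    (ψ : (t : ℕ) → (Fin (t + 1) → (X → ℝ)) → X → U)
    (ρ : X → ℝ≥0∞) (ν : W → ℝ≥0∞) (hρ : ∑ x : X, ρ x = 1) (hν : ∑ w : W, ν w = 1)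
    (mass : ((Fin n → X) × (Fin T → Fin n → W)) → ℝ≥0∞)
    (hmass : ∀ ω, mass ω = (∏ i, ρ (ω.1 i)) * ∏ t, ∏ i, ν (ω.2 t i))
    (t : ℕ) (ht : t < T)
    (zs : Fin (t + 1) → (X → ℝ)) (γs : Fin (t + 1) → (X → U)) (znext : X → ℝ)
    (A B C : Finset ((Fin n → X) × (Fin T → Fin n → W)))
    (hA : ∀ ω, ω ∈ A ↔
      (∀ s : Fin (t + 1), emp (mfState f ψ ω (s : ℕ)) = zs s) ∧
      (∀ s : Fin (t + 1),
        (ψ (s : ℕ) fun r : Fin ((s : ℕ) + 1) => emp (mfState f ψ ω (r : ℕ))) = γs s))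
    (hB : ∀ ω, ω ∈ B ↔
      emp (mfState f ψ ω t) = zs (Fin.last t) ∧
      (ψ t fun r : Fin (t + 1) => emp (mfState f ψ ω (r : ℕ))) = γs (Fin.last t))
    (hC : ∀ ω, ω ∈ C ↔ emp (mfState f ψ ω (t + 1)) = znext)
    (hApos : ∑ ω ∈ A, mass ω ≠ 0) (hBpos : ∑ ω ∈ B, mass ω ≠ 0) :
    (∑ ω ∈ A ∩ C, mass ω) / (∑ ω ∈ A, mass ω) =
      (∑ ω ∈ B ∩ C, mass ω) / (∑ ω ∈ B, mass ω) := by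
  obtain rfl : mass = productMass ρ ν := funext hmass
  have hAB : ∀ ω ∈ A, ω ∈ B := fun ω hω =>
    (hB ω).2 ⟨((hA ω).1 hω).1 (Fin.last t), ((hA ω).1 hω).2 (Fin.last t)⟩
  have hAdet : IsDeterminedBefore t A := fun ω ω' h hω => by
    obtain ⟨hz, hγ⟩ := (hA ω).1 hω
    refine (hA ω').2 ⟨fun s => ?_, fun s => ?_⟩
    · rw [← mfState_eq_of_agreeBefore f ψ h s.is_le]; exact hz s
    · rw [← mfHistory_eq_of_agreeBefore f ψ h s.is_le]; exact hγ s
  have hBdet : IsDeterminedBefore t B := fun ω ω' h hω => by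
    rw [hB, ← mfState_eq_of_agreeBefore f ψ h le_rfl, ← mfHistory_eq_of_agreeBefore f ψ h le_rfl]
    exact (hB ω).1 hω
  obtain ⟨ω₀, hω₀⟩ := Finset.nonempty_of_sum_ne_zero hApos
  have hx := ((hB ω₀).1 (hAB ω₀ hω₀)).1
  rw [sum_inter_eq_stepKernel_mul f ψ hν ht hx hAdet (fun ω hω => (hB ω).1 (hAB ω hω)) hC,
    sum_inter_eq_stepKernel_mul f ψ hν ht hx hBdet (fun ω hω => (hB ω).1 hω) hC,
    mul_div_assoc, mul_div_assoc, ENNReal.div_self hApos (sum_productMass_ne_top hρ hν A),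
    ENNReal.div_self hBpos (sum_productMass_ne_top hρ hν B)]

/-- The mean-field process `{Z_t}` is a controlled Markov process with control `γ_t`:
the conditional distribution of `Z_{t+1}` given `(Z_{0:t}, γ_{0:t})` equals the
conditional distribution of `Z_{t+1}` given `(Z_t, γ_t)`. Here the probability of an
event is the sum of the product-form masses (initial states i.i.d. with law `ρ`, noises
i.i.d. across `i` and `t` with law `ν`), and conditional probabilities are ratios. -/
theorem mean_field_is_controlled_markov
    [Fintype X] [DecidableEq X] [Fintype U] [DecidableEq U]
    [Fintype W] [DecidableEq W] [Inhabited W] {n T : ℕ} (hn : 1 ≤ n)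
    (f : (X → ℝ) → X → U → W → X)
    (ψ : (t : ℕ) → (Fin (t + 1) → (X → ℝ)) → X → U)
    (ρ : X → ℝ≥0∞) (ν : W → ℝ≥0∞) (hρ : ∑ x : X, ρ x = 1) (hν : ∑ w : W, ν w = 1)
    (mass : ((Fin n → X) × (Fin T → Fin n → W)) → ℝ≥0∞)
    (hmass : ∀ ω, mass ω = (∏ i, ρ (ω.1 i)) * ∏ t, ∏ i, ν (ω.2 t i))
    (t : ℕ) (ht : t < T)
    (zs : Fin (t + 1) → (X → ℝ)) (γs : Fin (t + 1) → (X → U)) (znext : X → ℝ)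
    (A B C : Finset ((Fin n → X) × (Fin T → Fin n → W)))
    (hA : ∀ ω, ω ∈ A ↔
      (∀ s : Fin (t + 1), emp (mfState f ψ ω (s : ℕ)) = zs s) ∧
      (∀ s : Fin (t + 1),
        (ψ (s : ℕ) fun r : Fin ((s : ℕ) + 1) => emp (mfState f ψ ω (r : ℕ))) = γs s))
    (hB : ∀ ω, ω ∈ B ↔
      emp (mfState f ψ ω t) = zs (Fin.last t) ∧
      (ψ t fun r : Fin (t + 1) => emp (mfState f ψ ω (r : ℕ))) = γs (Fin.last t))
    (hC : ∀ ω, ω ∈ C ↔ emp (mfState f ψ ω (t + 1)) = znext)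
    (hApos : ∑ ω ∈ A, mass ω ≠ 0) (hBpos : ∑ ω ∈ B, mass ω ≠ 0) :
    (∑ ω ∈ A ∩ C, mass ω) / (∑ ω ∈ A, mass ω) =
      (∑ ω ∈ B ∩ C, mass ω) / (∑ ω ∈ B, mass ω) :=
  mean_field_is_controlled_markov_general f ψ ρ ν hρ hν mass hmass t ht zs γs znext A B C hA hB hC
    hApos hBpos
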